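/- arXiv:math/0302085 — 6 statements merged into one kernel-verified Lean document; each statement's English description precedes it below -/
import Mathlib

section
/- For k ≥ 1 define the integer N_k := ℓ + card{(x, y) ∈ E_k × E_k : f.denom evaluated at x (under the algebra map Fq → E_k) is nonzero and y^p − y = f.eval (algebraMap Fq E_k) x}. Suppose Z is a formal power series over K with constant coefficient 1 satisfying X · (derivative of Z) = Z · ∑_{k≥1} N_k X^k, and for each unit u ∈ (ZMod p)ˣ suppose L_u is a formal power series over K with constant coefficient 1 satisfying X · (derivative of L_u) = L_u · ∑_{k≥1} S_k^{(u)} X^k. Then (1 − X)·(1 − q·X)·Z = ∏_{u ∈ (ZMod p)ˣ} L_u as formal power series over K. (This is the identity Zeta(C_f;T) = N_{ℚ(ζ_p)/ℚ}(L(f;T)) / ((1−T)(1−qT)) relating the zeta function of the Artin–Schreier curve y^p − y = f(x) to the L-functions of the exponential sums of the multiples of f.) -/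
/-!
Count the affine points of `y^p - y = f(x)` fibre by fibre. Over a finite field `E` of
characteristic `p`, the equation `y^p - y = t` has `p` solutions when `Tr_{E/𝔽_p} t = 0` and
none otherwise: its left side is additive with kernel `𝔽_p`, and its image lies in, hence by
counting equals, the kernel of the trace. Orthogonality of the characters `c ↦ ψ(c·s)` turns
this into `∑_{c ∈ 𝔽_p} ψ(c · Tr t)`, so the affine count is `∑_c S_k^{(c)}`. With
`S_k^{(0)} = q^k - (ℓ - 1)` and the `ℓ` points above the poles of `f` this gives
`N_k = 1 + q^k + ∑_{u ≠ 0} S_k^{(u)}`. Both sides of the identity therefore have the same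
constant term and the same logarithmic derivative, which determines a power series over a ring
of characteristic zero.
-/

open Polynomial Finset

namespace PowerSeries

variable {R : Type*} [CommRing R]

/-- `a = X f' / f`, stated without division. -/
def HasXLogDeriv (f a : R⟦X⟧) : Prop :=
  X * d⁄dX R f = f * a

theorem HasXLogDeriv.mul {f g a b : R⟦X⟧} (hf : HasXLogDeriv f a) (hg : HasXLogDeriv g b) :
    HasXLogDeriv (f * g) (a + b) := by
  unfold HasXLogDeriv at *
  rw [Derivation.leibniz, smul_eq_mul, smul_eq_mul]
  linear_combination f * hg + g * hf

theorem HasXLogDeriv.prod {ι : Type*} {s : Finset ι} {f a : ι → R⟦X⟧}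
    (h : ∀ i ∈ s, HasXLogDeriv (f i) (a i)) :
    HasXLogDeriv (∏ i ∈ s, f i) (∑ i ∈ s, a i) := by
  classical
  induction s using Finset.induction_on with
  | empty => simp [HasXLogDeriv]
  | insert i s hi ih =>
    rw [prod_insert hi, sum_insert hi]
    exact (h i (mem_insert_self i s)).mul (ih fun j hj => h j (mem_insert_of_mem hj))

theorem one_sub_C_mul_X_mul_mk_pow (c : R) : (1 - C c * X) * mk (c ^ ·) = 1 := by
  ext (_ | n)
  · simp
  · simp [sub_mul, mul_assoc, coeff_succ_X_mul, pow_succ']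

theorem hasXLogDeriv_one_sub_C_mul_X (c : R) :
    HasXLogDeriv (1 - C c * X) (-(C c * X * mk (c ^ ·))) := by
  have hd : d⁄dX R (1 - C c * X) = -C c := by simp
  rw [HasXLogDeriv, hd]
  linear_combination (C c * X) * one_sub_C_mul_X_mul_mk_pow c

theorem HasXLogDeriv.eq_of_constantCoeff_eq [IsAddTorsionFree R] {f g a : R⟦X⟧}
    (hf : HasXLogDeriv f a) (hg : HasXLogDeriv g a) (ha : constantCoeff a = 0)
    (hfg : constantCoeff f = constantCoeff g) : f = g := by
  ext n
  induction n using Nat.strong_induction_on with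
  | _ n ih =>
  rcases n with _ | n
  · simpa using hfg
  · have hcoeff (h : R⟦X⟧) (hh : HasXLogDeriv h a) :
        (n + 1) • coeff (n + 1) h =
          ∑ ij ∈ antidiagonal (n + 1), coeff ij.1 h * coeff ij.2 a := by
      rw [← coeff_mul, ← hh, coeff_succ_X_mul, coeff_derivative, nsmul_eq_mul, mul_comm]
      push_cast
      ring
    -- the term `ij.2 = 0` vanishes, so only coefficients `ij.1 ≤ n` of `f` and `g` enter
    have hsum : ∑ ij ∈ antidiagonal (n + 1), coeff ij.1 f * coeff ij.2 a =
        ∑ ij ∈ antidiagonal (n + 1), coeff ij.1 g * coeff ij.2 a := by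
      refine sum_congr rfl fun ij hij => ?_
      rcases Nat.eq_zero_or_pos ij.2 with h0 | hpos
      · simp [h0, ha]
      · rw [ih ij.1 (by have := mem_antidiagonal.mp hij; omega)]
    exact nsmul_right_injective n.succ_ne_zero
      ((hcoeff f hf).trans (hsum.trans (hcoeff g hg).symm))

theorem one_sub_X_mul_one_sub_C_mul_X_mul_eq_prod [IsAddTorsionFree R] {ι : Type*}
    [Fintype ι] (q : R) {N : ℕ → R} {S : ι → ℕ → R}
    (hN : ∀ k, 1 ≤ k → N k = 1 + q ^ k + ∑ i, S i k)
    {Z : R⟦X⟧} (hZ0 : constantCoeff Z = 1)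
    (hZ : HasXLogDeriv Z (mk fun k => if k = 0 then 0 else N k))
    {L : ι → R⟦X⟧} (hL0 : ∀ i, constantCoeff (L i) = 1)
    (hL : ∀ i, HasXLogDeriv (L i) (mk fun k => if k = 0 then 0 else S i k)) :
    (1 - X) * (1 - C q * X) * Z = ∏ i, L i := by
  have hlog : -(X * mk (1 ^ ·)) + -(C q * X * mk (q ^ ·)) +
      mk (fun k => if k = 0 then 0 else N k) =
      ∑ i, mk (fun k => if k = 0 then 0 else S i k) := by
    ext (_ | k)
    · simp
    · simp only [one_pow, mul_assoc, map_add, map_neg, coeff_succ_X_mul, coeff_mk, coeff_C_mul,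
        Nat.add_eq_zero_iff, one_ne_zero, and_false, ↓reduceIte, hN (k + 1) k.succ_pos,
        pow_succ', map_sum]
      ring
  have hLHS := ((hasXLogDeriv_one_sub_C_mul_X 1).mul (hasXLogDeriv_one_sub_C_mul_X q)).mul hZ
  rw [map_one, one_mul, hlog] at hLHS
  exact hLHS.eq_of_constantCoeff_eq (HasXLogDeriv.prod fun i _ => hL i) (by simp)
    (by simp [hZ0, hL0])

end PowerSeries

section ArtinSchreier

variable (p : ℕ) [Fact p.Prime] (F : Type*) [Field F]

def artinSchreier [CharP F p] : F →+ F :=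
  (frobenius F p).toAddMonoidHom - AddMonoidHom.id F

@[simp]
theorem artinSchreier_apply [CharP F p] (y : F) : artinSchreier p F y = y ^ p - y := rfl

theorem card_ker_artinSchreier [CharP F p] : Nat.card (artinSchreier p F).ker = p := by
  refine (Nat.card_congr <| Equiv.subtypeEquivRight fun y => ?_).trans (Subfield.card_bot F p)
  rw [AddMonoidHom.mem_ker, artinSchreier_apply, sub_eq_zero, Subfield.mem_bot_iff_pow_eq_self]

variable [Finite F] [Algebra (ZMod p) F]

theorem trace_pow_char (y : F) :
    Algebra.trace (ZMod p) F (y ^ p) = Algebra.trace (ZMod p) F y := by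
  have := Algebra.trace_eq_of_algEquiv (FiniteField.frobeniusAlgEquivOfAlgebraic (ZMod p) F) y
  rwa [FiniteField.coe_frobeniusAlgEquivOfAlgebraic, ZMod.card] at this

theorem range_artinSchreier [CharP F p] :
    (artinSchreier p F).range = (Algebra.trace (ZMod p) F).toAddMonoidHom.ker := by
  have hle : (artinSchreier p F).range ≤ (Algebra.trace (ZMod p) F).toAddMonoidHom.ker := by
    rintro _ ⟨y, rfl⟩
    simp [trace_pow_char]
  refine AddSubgroup.eq_of_le_of_card_ge hle (Nat.le_of_eq ?_)
  have hTrace : (Algebra.trace (ZMod p) F).toAddMonoidHom.ker.index = p := by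
    rw [AddSubgroup.index_ker, AddMonoidHom.range_eq_top.mpr (Algebra.trace_surjective _ F),
      AddSubgroup.card_top, Nat.card_zmod]
  have hAS : (artinSchreier p F).range.index = p := by
    rw [AddSubgroup.index_range, card_ker_artinSchreier]
  have h := ((Algebra.trace (ZMod p) F).toAddMonoidHom.ker.card_mul_index).trans
    (artinSchreier p F).range.card_mul_index.symm
  rw [hTrace, hAS] at h
  exact Nat.eq_of_mul_eq_mul_right (Fact.out : p.Prime).pos h

theorem card_artinSchreier_fiber [CharP F p] (t : F) :
    Nat.card {y : F // y ^ p - y = t} = if Algebra.trace (ZMod p) F t = 0 then p else 0 := by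
  split_ifs with ht
  · obtain ⟨y₀, rfl⟩ : t ∈ (artinSchreier p F).range := by
      rw [range_artinSchreier]
      exact ht
    exact (Nat.card_congr ((Equiv.subtypeEquivRight fun y => by simp).trans
      ((artinSchreier p F).fiberEquivKer y₀))).trans (card_ker_artinSchreier p F)
  · have : IsEmpty {y : F // y ^ p - y = t} :=
      ⟨fun ⟨y, hy⟩ => ht (by simp [← hy, trace_pow_char])⟩
    exact Nat.card_of_isEmpty

variable {p F} {K : Type*} [CommRing K] [IsDomain K] {ψ : AddChar (ZMod p) K}

theorem card_artinSchreier_fiber_eq_sum_addChar (hψ : ψ ≠ 1) (t : F) :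
    (Nat.card {y : F // y ^ p - y = t} : K) =
      ∑ c : ZMod p, ψ (c * Algebra.trace (ZMod p) F t) := by
  have : CharP F p := charP_of_injective_algebraMap' (ZMod p) p
  rw [card_artinSchreier_fiber, AddChar.sum_mulShift _ (.of_ne_one hψ), ZMod.card]

end ArtinSchreier

theorem card_artinSchreier_points_eq_sum_addChar {p : ℕ} [Fact p.Prime] {F : Type*} [Field F]
    [Fintype F] [Algebra (ZMod p) F] {K : Type*} [CommRing K] [IsDomain K]
    {ψ : AddChar (ZMod p) K} (hψ : ψ ≠ 1) (U : F → Prop) [DecidablePred U] (g : F → F) :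
    (Nat.card {xy : F × F // U xy.1 ∧ xy.2 ^ p - xy.2 = g xy.1} : K) =
      ∑ c : ZMod p, ∑ x ∈ univ.filter U, ψ (c * Algebra.trace (ZMod p) F (g x)) := by
  rw [Nat.card_congr (Equiv.subtypeProdEquivSigmaSubtype fun x y => U x ∧ y ^ p - y = g x),
    Nat.card_sigma, sum_comm, Nat.cast_sum, sum_filter]
  refine sum_congr rfl fun x _ => ?_
  split_ifs with hx
  · simp only [hx, true_and, card_artinSchreier_fiber_eq_sum_addChar hψ]
  · simp [hx]

theorem Fintype.sum_eq_add_sum_units {G₀ M : Type*} [GroupWithZero G₀] [Fintype G₀]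
    [DecidableEq G₀] [AddCommMonoid M] (f : G₀ → M) :
    ∑ x, f x = f 0 + ∑ u : G₀ˣ, f u := by
  rw [Fintype.sum_eq_add_sum_subtype_ne f 0, ← unitsEquivNeZero.sum_comp]
  rfl

open scoped Classical in
theorem card_filter_eval₂_prod_X_sub_C_pow_ne_zero_add_card {ι R L : Type*} [Fintype ι]
    [CommRing R] [CommRing L] [IsDomain L] [Fintype L]
    {φ : R →+* L} (hφ : Function.Injective φ) {θ : ι → R} (hθ : Function.Injective θ)
    {d : ι → ℕ} (hd : ∀ i, d i ≠ 0) :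
    #{x | eval₂ φ x (∏ i, (X - C (θ i)) ^ d i) ≠ 0} + Fintype.card ι = Fintype.card L := by
  have hzeros : ({x | ¬eval₂ φ x (∏ i, (X - C (θ i)) ^ d i) ≠ 0} : Finset L) =
      univ.image (φ ∘ θ) := by
    ext x
    simp only [mem_filter, mem_univ, true_and, not_not, mem_image, Function.comp_apply,
      eval₂_finsetProd, prod_eq_zero_iff, eval₂_pow, eval₂_sub, eval₂_X, eval₂_C,
      pow_eq_zero_iff (hd _), sub_eq_zero]
    simp [eq_comm]
  have := card_filter_add_card_filter_not (s := univ)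
    (fun x => eval₂ φ x (∏ i, (X - C (θ i)) ^ d i) ≠ 0)
  rwa [hzeros, card_image_of_injective _ (hφ.comp hθ), card_univ, card_univ] at this

open scoped Classical in
theorem zeta_artinSchreier_eq_prod_L_general
    (p : ℕ) [hp : Fact p.Prime] (a : ℕ)
    (Fq : Type) [Field Fq]
    (ℓ : ℕ) (hℓ : 1 ≤ ℓ)
    (θ : Fin (ℓ - 1) → Fq) (hθ : Function.Injective θ)
    (dθ : Fin (ℓ - 1) → ℕ)
    (hdθ : ∀ j, 0 < dθ j)
    (f : RatFunc Fq)
    (hden : f.denom = ∏ j : Fin (ℓ - 1), (X - C (θ j)) ^ dθ j)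
    (ψ : AddChar (ZMod p) (CyclotomicField p ℚ)) (hψ : ψ ≠ 1)
    (E : ℕ → Type) [∀ k, Field (E k)] [∀ k, Fintype (E k)]
    [∀ k, Algebra Fq (E k)] [∀ k, Algebra (ZMod p) (E k)]
    (hE : ∀ k, 1 ≤ k → Fintype.card (E k) = (p ^ a) ^ k)
    (S : ZMod p → ℕ → CyclotomicField p ℚ)
    (hS : ∀ (c : ZMod p) (k : ℕ), 1 ≤ k → S c k =
      ∑ x ∈ univ.filter
          (fun x : E k => Polynomial.eval₂ (algebraMap Fq (E k)) x f.denom ≠ 0),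
        ψ (c * (Algebra.trace (ZMod p) (E k)) (RatFunc.eval (algebraMap Fq (E k)) x f)))
    (N : ℕ → ℕ)
    (hN : ∀ k, 1 ≤ k → N k = ℓ + Nat.card {xy : E k × E k //
        Polynomial.eval₂ (algebraMap Fq (E k)) xy.1 f.denom ≠ 0 ∧
        xy.2 ^ p - xy.2 = RatFunc.eval (algebraMap Fq (E k)) xy.1 f})
    (Z : PowerSeries (CyclotomicField p ℚ))
    (hZ0 : PowerSeries.constantCoeff Z = 1)
    (hZ : PowerSeries.X * Z.derivativeFun =
      Z * PowerSeries.mk (fun k =>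
        if k = 0 then 0 else ((N k : ℕ) : CyclotomicField p ℚ)))
    (L : (ZMod p)ˣ → PowerSeries (CyclotomicField p ℚ))
    (hL0 : ∀ u, PowerSeries.constantCoeff (L u) = 1)
    (hL : ∀ u, PowerSeries.X * (L u).derivativeFun =
      L u * PowerSeries.mk (fun k => if k = 0 then 0 else S (u : ZMod p) k)) :
    (1 - PowerSeries.X) *
        (1 - PowerSeries.C ((p ^ a : ℕ) : CyclotomicField p ℚ) *
          PowerSeries.X) * Z =
      ∏ u : (ZMod p)ˣ, L u := by
  refine PowerSeries.one_sub_X_mul_one_sub_C_mul_X_mul_eq_prod _ (fun k hk => ?_) hZ0 hZ hL0 hL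
  have hpoles := card_filter_eval₂_prod_X_sub_C_pow_ne_zero_add_card
    (algebraMap Fq (E k)).injective hθ fun j => (hdθ j).ne'
  rw [← hden, Fintype.card_fin, hE k hk] at hpoles
  have hpoles' :
      (#{x : E k | eval₂ (algebraMap Fq (E k)) x f.denom ≠ 0} : CyclotomicField p ℚ) +
        ℓ - 1 = ((p ^ a : ℕ) : CyclotomicField p ℚ) ^ k := by
    rw [add_sub_assoc, ← Nat.cast_pred hℓ]
    exact_mod_cast hpoles
  rw [hN k hk, Nat.cast_add, card_artinSchreier_points_eq_sum_addChar hψ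
    (fun x => eval₂ (algebraMap Fq (E k)) x f.denom ≠ 0)
    (fun x => RatFunc.eval (algebraMap Fq (E k)) x f), Fintype.sum_eq_add_sum_units]
  simp only [hS _ k hk, zero_mul, AddChar.map_zero_eq_one, sum_const, nsmul_one]
  linear_combination hpoles'

open scoped Classical in
/-- The zeta function of the Artin–Schreier curve `y^p - y = f(x)` decomposes as the product
of the `L`-functions of the exponential sums of the nonzero multiples of `f`:
`(1 - T)(1 - qT) · Zeta(C_f; T) = ∏_{u ∈ (ZMod p)ˣ} L(u·f; T)`, where `Zeta` and the `L_u`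
are characterized by the logarithmic-derivative conditions
`T·Z' = Z·∑_{k ≥ 1} N_k T^k` and `T·L_u' = L_u·∑_{k ≥ 1} S_k^{(u)} T^k`. -/
theorem zeta_artinSchreier_eq_prod_L
    (p : ℕ) [hp : Fact p.Prime] (a : ℕ) (ha : 1 ≤ a)
    (Fq : Type) [Field Fq] [Fintype Fq] (hcard : Fintype.card Fq = p ^ a)
    (ℓ : ℕ) (hℓ : 1 ≤ ℓ)
    (θ : Fin (ℓ - 1) → Fq) (hθ : Function.Injective θ)
    (d0 : ℕ) (dθ : Fin (ℓ - 1) → ℕ)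
    (hd0 : 0 < d0) (hdθ : ∀ j, 0 < dθ j)
    (hd0p : Nat.Coprime p d0) (hdθp : ∀ j, Nat.Coprime p (dθ j))
    (hnot : ¬(ℓ = 1 ∧ d0 = 1))
    (f : RatFunc Fq)
    (hden : f.denom = ∏ j : Fin (ℓ - 1), (X - C (θ j)) ^ dθ j)
    (hnum : f.num.natDegree = d0 + ∑ j : Fin (ℓ - 1), dθ j)
    (ψ : AddChar (ZMod p) (CyclotomicField p ℚ)) (hψ : ψ ≠ 1)
    (E : ℕ → Type) [∀ k, Field (E k)] [∀ k, Fintype (E k)]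
    [∀ k, Algebra Fq (E k)] [∀ k, Algebra (ZMod p) (E k)]
    (hE : ∀ k, 1 ≤ k → Fintype.card (E k) = (p ^ a) ^ k)
    (S : ZMod p → ℕ → CyclotomicField p ℚ)
    (hS : ∀ (c : ZMod p) (k : ℕ), 1 ≤ k → S c k =
      ∑ x ∈ univ.filter
          (fun x : E k => Polynomial.eval₂ (algebraMap Fq (E k)) x f.denom ≠ 0),
        ψ (c * (Algebra.trace (ZMod p) (E k)) (RatFunc.eval (algebraMap Fq (E k)) x f)))
    (N : ℕ → ℕ)
    (hN : ∀ k, 1 ≤ k → N k = ℓ + Nat.card {xy : E k × E k //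
        Polynomial.eval₂ (algebraMap Fq (E k)) xy.1 f.denom ≠ 0 ∧
        xy.2 ^ p - xy.2 = RatFunc.eval (algebraMap Fq (E k)) xy.1 f})
    (Z : PowerSeries (CyclotomicField p ℚ))
    (hZ0 : PowerSeries.constantCoeff Z = 1)
    (hZ : PowerSeries.X * Z.derivativeFun =
      Z * PowerSeries.mk (fun k =>
        if k = 0 then 0 else ((N k : ℕ) : CyclotomicField p ℚ)))
    (L : (ZMod p)ˣ → PowerSeries (CyclotomicField p ℚ))
    (hL0 : ∀ u, PowerSeries.constantCoeff (L u) = 1)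
    (hL : ∀ u, PowerSeries.X * (L u).derivativeFun =
      L u * PowerSeries.mk (fun k => if k = 0 then 0 else S (u : ZMod p) k)) :
    (1 - PowerSeries.X) *
        (1 - PowerSeries.C ((p ^ a : ℕ) : CyclotomicField p ℚ) *
          PowerSeries.X) * Z =
      ∏ u : (ZMod p)ˣ, L u :=
  zeta_artinSchreier_eq_prod_L_general p (hp := hp) a Fq ℓ hℓ θ hθ dθ hdθ f hden ψ hψ E hE S hS N hN
    Z hZ0 hZ L hL0 hL
end

section
/- Let P ∈ K with ‖P‖ ≤ 1, let k ≥ 1 be an integer, set s := p^k, and let r ∈ ℝ with r ≥ p^{−p/(p−1)}. Then for every X ∈ K: (1) if ‖X − P‖ > r^{1/s} then ‖X^s − P^s‖ = ‖X − P‖^s > r; (2) if ‖X^s − P^s‖ > r then ‖X^s − P^s‖ = ‖X − P‖^s. (Here r^{1/s} and p^{−p/(p−1)} are real powers via rpow.) -/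
open Finset IsUltrametricDist

-- binomial expansion error term
lemma dwork_expand {K : Type*} [CommRing K] (Y Q : K) (p : ℕ) (hp : 1 ≤ p) :
    Y ^ p - Q ^ p = (Y - Q) ^ p + ∑ i ∈ Finset.Ico 1 p, (Y - Q) ^ i * Q ^ (p - i) * (p.choose i) := by
  have h := add_pow (Y - Q) Q p
  rw [sub_add_cancel] at h
  rw [h, Finset.sum_range_succ, Finset.range_eq_Ico,
    Finset.sum_eq_sum_Ico_succ_bot (by omega : 0 < p)]
  simp [Nat.choose_self]
  ring

lemma dwork_err {K : Type*} [NormedField K] [IsUltrametricDist K]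
    (p : ℕ) [hp : Fact p.Prime] (hpK : ‖(p : K)‖ = (p : ℝ)⁻¹)
    (Y Q : K) (hQ : ‖Q‖ ≤ 1) :
    ‖∑ i ∈ Finset.Ico 1 p, (Y - Q) ^ i * Q ^ (p - i) * (p.choose i)‖
      ≤ (p : ℝ)⁻¹ * max ‖Y - Q‖ (‖Y - Q‖ ^ p) := by
  have hp1 : 1 < p := hp.out.one_lt
  have hd : (0:ℝ) ≤ ‖Y - Q‖ := norm_nonneg _
  apply norm_sum_le_of_forall_le_of_nonneg
  · positivity
  intro i hi
  simp only [Finset.mem_Ico] at hi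
  have hchoose : ‖((p.choose i : ℕ) : K)‖ ≤ (p : ℝ)⁻¹ := by
    obtain ⟨m, hm⟩ := hp.out.dvd_choose_self (by omega : i ≠ 0) hi.2
    rw [hm]
    push_cast
    rw [norm_mul, hpK]
    calc (p:ℝ)⁻¹ * ‖(m : K)‖ ≤ (p:ℝ)⁻¹ * 1 := by
          exact mul_le_mul_of_nonneg_left (norm_natCast_le_one K m) (by positivity)
      _ = (p:ℝ)⁻¹ := mul_one _
  have hdi : ‖Y - Q‖ ^ i ≤ max ‖Y - Q‖ (‖Y - Q‖ ^ p) := by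
    rcases le_total ‖Y - Q‖ 1 with h1 | h1
    · exact le_max_of_le_left (pow_le_of_le_one hd h1 (by omega))
    · exact le_max_of_le_right (pow_le_pow_right₀ h1 (by omega))
  calc ‖(Y - Q) ^ i * Q ^ (p - i) * (p.choose i)‖
      = ‖Y - Q‖ ^ i * ‖Q‖ ^ (p - i) * ‖((p.choose i : ℕ) : K)‖ := by
        rw [norm_mul, norm_mul, norm_pow, norm_pow]
    _ ≤ max ‖Y - Q‖ (‖Y - Q‖ ^ p) * 1 * (p : ℝ)⁻¹ := by
        apply mul_le_mul (mul_le_mul hdi (pow_le_one₀ (norm_nonneg _) hQ) (by positivity) (by positivity)) hchoose (norm_nonneg _) (by positivity)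
    _ = (p : ℝ)⁻¹ * max ‖Y - Q‖ (‖Y - Q‖ ^ p) := by ring

lemma dwork_step_upper {K : Type*} [NormedField K] [IsUltrametricDist K]
    (p : ℕ) [hp : Fact p.Prime] (hpK : ‖(p : K)‖ = (p : ℝ)⁻¹)
    (Y Q : K) (hQ : ‖Q‖ ≤ 1) (t : ℝ) (ht : ‖Y - Q‖ ≤ t)
    (hpt : (p : ℝ)⁻¹ ≤ t ^ (p - 1)) : ‖Y ^ p - Q ^ p‖ ≤ t ^ p := by
  have hp1 : 1 < p := hp.out.one_lt
  have ht0 : 0 ≤ t := (norm_nonneg _).trans ht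
  have hd : (0:ℝ) ≤ ‖Y - Q‖ := norm_nonneg _
  rw [dwork_expand Y Q p (by omega)]
  apply (norm_add_le_max _ _).trans
  apply max_le
  · rw [norm_pow]; exact pow_le_pow_left₀ hd ht p
  · apply (dwork_err p hpK Y Q hQ).trans
    rw [mul_max_of_nonneg _ _ (by positivity : (0:ℝ) ≤ (p:ℝ)⁻¹)]
    apply max_le
    · calc (p:ℝ)⁻¹ * ‖Y - Q‖ ≤ t ^ (p-1) * t :=
            mul_le_mul hpt ht hd (by positivity)
        _ = t ^ p := by rw [← pow_succ]; congr 1; omega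
    · calc (p:ℝ)⁻¹ * ‖Y - Q‖ ^ p ≤ 1 * t ^ p := by
            apply mul_le_mul _ (pow_le_pow_left₀ hd ht p) (by positivity) zero_le_one
            rw [inv_le_one_iff₀]; right; exact_mod_cast hp1.le
        _ = t ^ p := one_mul _

lemma dwork_step_eq {K : Type*} [NormedField K] [IsUltrametricDist K]
    (p : ℕ) [hp : Fact p.Prime] (hpK : ‖(p : K)‖ = (p : ℝ)⁻¹)
    (Y Q : K) (hQ : ‖Q‖ ≤ 1)
    (hpt : (p : ℝ)⁻¹ < ‖Y - Q‖ ^ (p - 1)) : ‖Y ^ p - Q ^ p‖ = ‖Y - Q‖ ^ p := by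
  have hp1 : 1 < p := hp.out.one_lt
  set d : ℝ := ‖Y - Q‖ with hdd
  have hd0 : 0 < d := by
    rcases eq_or_lt_of_le (norm_nonneg (Y - Q)) with h | h
    · exfalso; rw [← hdd] at h
      rw [← h, zero_pow (by omega : p - 1 ≠ 0)] at hpt
      exact absurd hpt (not_lt.mpr (by positivity))
    · exact h
  have herr : ‖∑ i ∈ Finset.Ico 1 p, (Y - Q) ^ i * Q ^ (p - i) * (p.choose i)‖ < d ^ p := by
    apply (dwork_err p hpK Y Q hQ).trans_lt
    rw [mul_max_of_nonneg _ _ (by positivity : (0:ℝ) ≤ (p:ℝ)⁻¹)]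
    apply max_lt
    · calc (p:ℝ)⁻¹ * d < d ^ (p-1) * d := by
            exact mul_lt_mul_of_pos_right hpt hd0
        _ = d ^ p := by rw [← pow_succ]; congr 1; omega
    · apply mul_lt_of_lt_one_left (by positivity)
      rw [inv_lt_one_iff₀]; right; exact_mod_cast hp1
  rw [dwork_expand Y Q p (by omega)]
  rw [norm_add_eq_max_of_norm_ne_norm (by rw [norm_pow]; exact (ne_of_lt herr).symm)]
  rw [norm_pow]
  exact max_eq_left herr.le

lemma dwork_iter_upper {K : Type*} [NormedField K] [IsUltrametricDist K]
    (p : ℕ) [hp : Fact p.Prime] (hpK : ‖(p : K)‖ = (p : ℝ)⁻¹)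
    (X P : K) (hP : ‖P‖ ≤ 1) (t : ℝ) (hXP : ‖X - P‖ ≤ t) :
    ∀ k : ℕ, (∀ j < k, (p : ℝ)⁻¹ ≤ t ^ (p ^ j * (p - 1))) →
      ‖X ^ p ^ k - P ^ p ^ k‖ ≤ t ^ p ^ k := by
  intro k
  induction k with
  | zero => intro _; simpa using hXP
  | succ k ih =>
    intro hcond
    have h1 : ‖X ^ p ^ k - P ^ p ^ k‖ ≤ t ^ p ^ k :=
      ih fun j hj => hcond j (by omega)
    have hQ : ‖P ^ p ^ k‖ ≤ 1 := by
      rw [norm_pow]; exact pow_le_one₀ (norm_nonneg _) hP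
    have hstep := dwork_step_upper p hpK (X ^ p ^ k) (P ^ p ^ k) hQ (t ^ p ^ k) h1
      (by rw [← pow_mul]; exact hcond k (by omega))
    rw [← pow_mul, ← pow_mul, ← pow_mul, ← pow_succ] at hstep
    exact hstep

lemma dwork_iter_eq {K : Type*} [NormedField K] [IsUltrametricDist K]
    (p : ℕ) [hp : Fact p.Prime] (hpK : ‖(p : K)‖ = (p : ℝ)⁻¹)
    (X P : K) (hP : ‖P‖ ≤ 1) :
    ∀ k : ℕ, (∀ j < k, (p : ℝ)⁻¹ < ‖X - P‖ ^ (p ^ j * (p - 1))) →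
      ‖X ^ p ^ k - P ^ p ^ k‖ = ‖X - P‖ ^ p ^ k := by
  intro k
  induction k with
  | zero => intro _; simp
  | succ k ih =>
    intro hcond
    have h1 : ‖X ^ p ^ k - P ^ p ^ k‖ = ‖X - P‖ ^ p ^ k :=
      ih fun j hj => hcond j (by omega)
    have hQ : ‖P ^ p ^ k‖ ≤ 1 := by
      rw [norm_pow]; exact pow_le_one₀ (norm_nonneg _) hP
    have hstep := dwork_step_eq p hpK (X ^ p ^ k) (P ^ p ^ k) hQ
      (by rw [h1, ← pow_mul]; exact hcond k (by omega))
    rw [h1, ← pow_mul, ← pow_mul, ← pow_mul, ← pow_succ] at hstep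
    exact hstep

lemma dwork_cond (p : ℕ) [hp : Fact p.Prime] (k j : ℕ) (hj : j < k) (r : ℝ)
    (hr : (p : ℝ) ^ (-(p : ℝ) / ((p : ℝ) - 1)) ≤ r) :
    (p : ℝ)⁻¹ ≤ (r ^ ((1 : ℝ) / ((p ^ k : ℕ) : ℝ))) ^ (p ^ j * (p - 1)) := by
  have hp1 : (1 : ℝ) < p := by exact_mod_cast hp.out.one_lt
  have hP0 : (0 : ℝ) < p := by linarith
  have hpk0 : (0 : ℝ) < ((p ^ k : ℕ) : ℝ) := by exact_mod_cast pow_pos hp.out.pos k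
  set a : ℝ := -(p : ℝ) / ((p : ℝ) - 1) with ha
  have hc0 : (p : ℝ) ^ (a / ((p ^ k : ℕ) : ℝ)) ≤ r ^ ((1 : ℝ) / ((p ^ k : ℕ) : ℝ)) := by
    have h := Real.rpow_le_rpow (by positivity) hr
      (by positivity : (0:ℝ) ≤ (1 : ℝ) / ((p ^ k : ℕ) : ℝ))
    rwa [← Real.rpow_mul hP0.le, mul_one_div] at h
  have hcast : ((p ^ j * (p - 1) : ℕ) : ℝ) = (p:ℝ) ^ j * ((p:ℝ) - 1) := by
    push_cast [Nat.cast_sub hp.out.one_le]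
    ring
  have key : a / ((p ^ k : ℕ) : ℝ) * ((p ^ j * (p - 1) : ℕ) : ℝ)
      = -((p:ℝ) ^ (j+1) / (p:ℝ) ^ k) := by
    rw [hcast, ha]
    have h1 : (p:ℝ) - 1 ≠ 0 := by linarith
    have h2 : ((p ^ k : ℕ) : ℝ) = (p:ℝ) ^ k := by push_cast; ring
    rw [h2]
    field_simp
    ring
  calc (p : ℝ)⁻¹ = (p : ℝ) ^ (-1 : ℝ) := (Real.rpow_neg_one _).symm
    _ ≤ (p : ℝ) ^ (a / ((p ^ k : ℕ) : ℝ) * ((p ^ j * (p - 1) : ℕ) : ℝ)) := by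
        rw [Real.rpow_le_rpow_left_iff hp1, key]
        have h3 : (p:ℝ) ^ (j+1) ≤ (p:ℝ) ^ k := pow_le_pow_right₀ hp1.le (by omega)
        have h4 : (p:ℝ) ^ (j+1) / (p:ℝ) ^ k ≤ 1 := (div_le_one (by positivity)).mpr h3
        linarith
    _ = ((p : ℝ) ^ (a / ((p ^ k : ℕ) : ℝ))) ^ (p ^ j * (p - 1)) := by
        rw [← Real.rpow_natCast ((p : ℝ) ^ (a / ((p ^ k : ℕ) : ℝ))), ← Real.rpow_mul hP0.le]
    _ ≤ _ := pow_le_pow_left₀ (by positivity) hc0 _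

/-- Dwork's lemma on norms of `p^k`-th power differences in a nonarchimedean normed field `K`
with `‖p‖ = p⁻¹`: for `‖P‖ ≤ 1`, `s = p^k` and `r ≥ p^{-p/(p-1)}`,
(1) `‖X - P‖ > r^{1/s}` implies `‖X^s - P^s‖ = ‖X - P‖^s > r`, and
(2) `‖X^s - P^s‖ > r` implies `‖X^s - P^s‖ = ‖X - P‖^s`. -/
theorem norm_pow_sub_pow_of_ultrametric
    (p : ℕ) [Fact p.Prime] (K : Type*) [NormedField K] [IsUltrametricDist K]
    (hpK : ‖(p : K)‖ = (p : ℝ)⁻¹)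
    (P : K) (hP : ‖P‖ ≤ 1) (k : ℕ) (hk : 1 ≤ k) (r : ℝ)
    (hr : (p : ℝ) ^ (-(p : ℝ) / ((p : ℝ) - 1)) ≤ r) :
    ∀ X : K,
      (r ^ ((1 : ℝ) / ((p ^ k : ℕ) : ℝ)) < ‖X - P‖ →
        ‖X ^ p ^ k - P ^ p ^ k‖ = ‖X - P‖ ^ p ^ k ∧ r < ‖X ^ p ^ k - P ^ p ^ k‖) ∧
      (r < ‖X ^ p ^ k - P ^ p ^ k‖ →
        ‖X ^ p ^ k - P ^ p ^ k‖ = ‖X - P‖ ^ p ^ k) := by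
  have hp : p.Prime := Fact.out
  have hp1 : 1 < p := hp.one_lt
  have hP0 : (0:ℝ) < p := by exact_mod_cast hp.pos
  have hr0 : 0 < r := lt_of_lt_of_le (Real.rpow_pos_of_pos hP0 _) hr
  set c : ℝ := r ^ ((1:ℝ)/((p^k:ℕ):ℝ)) with hc
  have hc0 : 0 < c := Real.rpow_pos_of_pos hr0 _
  have hcr : c ^ (p ^ k) = r := by
    rw [hc, one_div]
    exact Real.rpow_inv_natCast_pow hr0.le (pow_ne_zero k hp.pos.ne')
  have hcond : ∀ j < k, (p:ℝ)⁻¹ ≤ c ^ (p^j*(p-1)) := fun j hj => dwork_cond p k j hj r hr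
  intro X
  have part1 : c < ‖X - P‖ →
      ‖X ^ p ^ k - P ^ p ^ k‖ = ‖X - P‖ ^ p ^ k ∧ r < ‖X ^ p ^ k - P ^ p ^ k‖ := by
    intro hlt
    have hcondlt : ∀ j < k, (p:ℝ)⁻¹ < ‖X - P‖ ^ (p^j*(p-1)) := fun j hj =>
      lt_of_le_of_lt (hcond j hj)
        (pow_lt_pow_left₀ hlt hc0.le (Nat.mul_ne_zero (pow_ne_zero j hp.pos.ne') (by omega)))
    have heq := dwork_iter_eq p hpK X P hP k hcondlt
    refine ⟨heq, ?_⟩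
    rw [heq, ← hcr]
    exact pow_lt_pow_left₀ hlt hc0.le (pow_ne_zero k hp.pos.ne')
  refine ⟨part1, ?_⟩
  intro hgt
  rcases lt_or_ge c ‖X - P‖ with h | h
  · exact (part1 h).1
  · exfalso
    have hup := dwork_iter_upper p hpK X P hP c h k hcond
    rw [hcr] at hup
    exact absurd hgt (not_lt.mpr hup)
end

section
/- Let r ∈ ℝ with p^{−1/(p−1)} < r < 1, let P_1, …, P_m ∈ K with ‖P_j‖ ≤ 1 for all j, and let Z ∈ K satisfy ‖Z^p‖ ≤ r^{−p} and ‖Z^p − P_j^p‖ ≥ r^p for all 1 ≤ j ≤ m. Then ‖Z‖ ≤ r^{−1} and ‖Z − P_j‖ ≥ r for all 1 ≤ j ≤ m. (In other words, if Z^p lies in the affinoid obtained from the closed disk of radius r^{−p} by removing the open disks of radius r^p around the points P_j^p, then Z lies in the affinoid obtained from the closed disk of radius r^{−1} by removing the open disks of radius r around the P_j; this shows the operator U_p maps functions on the first affinoid to functions on the second.) -/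
open IsUltrametricDist Finset

/-- If `Z^p` lies in the affinoid obtained from the closed disk of radius `r^{-p}` by removing
the open disks of radius `r^p` around the points `P_j^p` (where `‖P_j‖ ≤ 1`), then `Z` lies in
the affinoid obtained from the closed disk of radius `r^{-1}` by removing the open disks of
radius `r` around the `P_j`. Here `K` is a nonarchimedean normed field with `‖p‖ = p⁻¹` and
`p^{-1/(p-1)} < r < 1`. -/
theorem mem_affinoid_of_pow_mem_affinoid
    (p : ℕ) [Fact p.Prime] (K : Type*) [NormedField K] [IsUltrametricDist K]
    (hpK : ‖(p : K)‖ = (p : ℝ)⁻¹)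
    (r : ℝ) (hr1 : (p : ℝ) ^ (-(1 : ℝ) / ((p : ℝ) - 1)) < r) (hr2 : r < 1)
    (m : ℕ) (P : Fin m → K) (hP : ∀ j, ‖P j‖ ≤ 1)
    (Z : K) (hZ : ‖Z ^ p‖ ≤ r⁻¹ ^ p) (hZP : ∀ j, r ^ p ≤ ‖Z ^ p - P j ^ p‖) :
    ‖Z‖ ≤ r⁻¹ ∧ ∀ j, r ≤ ‖Z - P j‖ := by
  have hp := (Fact.out : p.Prime)
  have hp1 : 1 < (p : ℝ) := by exact_mod_cast hp.one_lt
  have hppos : (0 : ℝ) < p := by positivity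
  have hr0 : 0 < r := lt_trans (by positivity) hr1
  have hp0 : 1 ≤ p := hp.one_le
  -- key: p⁻¹ < r^(p-1)
  have hkey : (p : ℝ)⁻¹ < r ^ (p - 1) := by
    have hpm1 : (0 : ℝ) < (p : ℝ) - 1 := by
      have : 2 ≤ (p : ℝ) := by exact_mod_cast hp.two_le
      linarith
    have h1 : ((p : ℝ) ^ (-(1 : ℝ) / ((p : ℝ) - 1))) ^ ((p : ℝ) - 1) < r ^ ((p : ℝ) - 1) :=
      Real.rpow_lt_rpow (by positivity) hr1 hpm1
    rw [← Real.rpow_mul (le_of_lt hppos), div_mul_cancel₀ _ (by linarith : (p : ℝ) - 1 ≠ 0)] at h1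
    rw [show (-(1:ℝ)) = ((-1 : ℤ) : ℝ) by norm_num, Real.rpow_intCast, zpow_neg_one] at h1
    have hc : ((p - 1 : ℕ) : ℝ) = (p : ℝ) - 1 := by
      have := hp.one_le; push_cast [Nat.cast_sub this]; ring
    rwa [← hc, Real.rpow_natCast] at h1
  constructor
  · rw [norm_pow] at hZ
    exact le_of_pow_le_pow_left₀ hp.ne_zero (by positivity) hZ
  · intro j
    by_contra h
    push_neg at h
    have hZPle : ‖Z - P j‖ < r := h
    have hnn : (0 : ℝ) ≤ ‖Z - P j‖ := norm_nonneg _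
    set C : ℝ := max (‖Z - P j‖ ^ p) ((p : ℝ)⁻¹ * ‖Z - P j‖) with hCdef
    have hC0 : 0 ≤ C := le_max_of_le_left (by positivity)
    have hClt : C < r ^ p := by
      apply max_lt
      · exact pow_lt_pow_left₀ hZPle hnn hp.ne_zero
      · calc (p : ℝ)⁻¹ * ‖Z - P j‖ < r ^ (p - 1) * r :=
            mul_lt_mul' (le_of_lt hkey) hZPle hnn (by positivity)
          _ = r ^ p := by rw [← pow_succ]; congr 1; omega
    have hexp : Z ^ p - P j ^ p =
        ∑ k ∈ Finset.range p, (Z - P j) ^ (k + 1) * P j ^ (p - (k + 1)) * (p.choose (k + 1)) := by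
      have h2 := add_pow (Z - P j) (P j) p
      rw [sub_add_cancel] at h2
      rw [h2, Finset.sum_range_succ']
      simp
    have hbound : ∀ k ∈ Finset.range p,
        ‖(Z - P j) ^ (k + 1) * P j ^ (p - (k + 1)) * ((p.choose (k + 1) : K))‖ ≤ C := by
      intro k hk
      rw [Finset.mem_range] at hk
      rw [norm_mul, norm_mul, norm_pow, norm_pow]
      rcases eq_or_lt_of_le (Nat.succ_le_of_lt hk) with heq | hlt
      · -- k + 1 = p : term is (Z-P)^p
        have e1 : p - (k + 1) = 0 := by omega
        have e2 : p.choose (k + 1) = 1 := by rw [← heq]; exact Nat.choose_self _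
        rw [e1, e2]
        calc ‖Z - P j‖ ^ (k + 1) * ‖P j‖ ^ 0 * ‖((1 : ℕ) : K)‖
            = ‖Z - P j‖ ^ (k + 1) := by simp
          _ = ‖Z - P j‖ ^ p := by rw [← heq]
          _ ≤ C := le_max_left _ _
      · -- 1 ≤ k+1 < p : p divides choose
        obtain ⟨c, hc⟩ := hp.dvd_choose_self (Nat.succ_ne_zero k) hlt
        have hnorm_choose : ‖((p.choose (k + 1) : ℕ) : K)‖ ≤ (p : ℝ)⁻¹ := by
          rw [hc]
          push_cast
          rw [norm_mul, hpK]
          calc (p : ℝ)⁻¹ * ‖(c : K)‖ ≤ (p : ℝ)⁻¹ * 1 :=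
                mul_le_mul_of_nonneg_left (norm_natCast_le_one K c) (by positivity)
            _ = (p : ℝ)⁻¹ := mul_one _
        have h1 : ‖Z - P j‖ ^ (k + 1) ≤ ‖Z - P j‖ := by
          calc ‖Z - P j‖ ^ (k + 1) ≤ ‖Z - P j‖ ^ 1 :=
              pow_le_pow_of_le_one hnn (le_of_lt (hZPle.trans hr2)) (by omega)
            _ = ‖Z - P j‖ := pow_one _
        calc ‖Z - P j‖ ^ (k + 1) * ‖P j‖ ^ (p - (k + 1)) * ‖((p.choose (k + 1) : ℕ) : K)‖
            ≤ ‖Z - P j‖ * 1 * (p : ℝ)⁻¹ := by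
              gcongr
              · exact pow_le_one₀ (norm_nonneg _) (hP j)
          _ = (p : ℝ)⁻¹ * ‖Z - P j‖ := by ring
          _ ≤ C := le_max_right _ _
    have hsum : ‖Z ^ p - P j ^ p‖ < r ^ p := by
      rw [hexp]
      exact lt_of_le_of_lt (norm_sum_le_of_forall_le_of_nonneg hC0 hbound) hClt
    exact absurd (hZP j) (not_le.mpr hsum)
end

section
/- Let a ≥ 1 be an integer, set q := p^a, and let r ∈ ℝ with p^{−1/(p^{a−1}(p−1))} < r < 1. Let P ∈ K with ‖P‖ ≤ 1 and P^q = P (a Teichmüller point), and let Z ∈ K satisfy ‖Z^q‖ ≤ r^{−q} and ‖Z^q − P‖ ≥ r^q. Then ‖Z‖ ≤ r^{−1} and ‖Z − P‖ ≥ r. -/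
/-- Arithmetic key: `p^a ≤ p^v + (a-v) * p^(a-1) * (p-1)` for `v < a`. -/
lemma aux_pow_sub_le (p : ℕ) (hp : 1 ≤ p) :
    ∀ a v : ℕ, v < a → p ^ a ≤ p ^ v + (a - v) * (p ^ (a - 1) * (p - 1)) := by
  intro a
  induction a with
  | zero => intro v hv; omega
  | succ n ih =>
    intro v hv
    rcases Nat.lt_or_ge v n with hvn | hvn
    · have IH := ih v hvn
      have h1 : p ^ (n + 1) = p ^ n + p ^ n * (p - 1) := by
        have : p ^ n * p = p ^ n * 1 + p ^ n * (p - 1) := by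
          rw [← Nat.mul_add]; congr 1; omega
        rw [pow_succ]; omega
      have h2 : p ^ (n - 1) ≤ p ^ n := Nat.pow_le_pow_right (by omega) (by omega)
      have h3 : (n - v) * (p ^ (n - 1) * (p - 1)) ≤ (n - v) * (p ^ n * (p - 1)) :=
        Nat.mul_le_mul_left _ (Nat.mul_le_mul_right _ h2)
      have h4 : (n + 1 - v) * (p ^ n * (p - 1))
          = (n - v) * (p ^ n * (p - 1)) + p ^ n * (p - 1) := by
        have he : n + 1 - v = (n - v) + 1 := by omega
        rw [he, Nat.add_mul, Nat.one_mul]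
      simp only [Nat.add_sub_cancel]
      omega
    · have hvn' : v = n := by omega
      subst hvn'
      have h1 : p ^ (v + 1) = p ^ v + p ^ v * (p - 1) := by
        have : p ^ v * p = p ^ v * 1 + p ^ v * (p - 1) := by
          rw [← Nat.mul_add]; congr 1; omega
        rw [pow_succ]; omega
      have h5 : (v + 1 - v) * (p ^ (v + 1 - 1) * (p - 1)) = p ^ v * (p - 1) := by
        simp
      omega

/-- Let `q = p^a` and `p^{-1/(p^{a-1}(p-1))} < r < 1`. If `P` is a Teichmüller point
(`‖P‖ ≤ 1`, `P^q = P`) in a nonarchimedean normed field `K` with `‖p‖ = p⁻¹`, and `Z ∈ K`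
satisfies `‖Z^q‖ ≤ r^{-q}` and `‖Z^q - P‖ ≥ r^q`, then `‖Z‖ ≤ r^{-1}` and `‖Z - P‖ ≥ r`. -/
theorem mem_affinoid_of_pow_q_mem_affinoid
    (p : ℕ) [Fact p.Prime] (K : Type*) [NormedField K] [IsUltrametricDist K]
    (hpK : ‖(p : K)‖ = (p : ℝ)⁻¹)
    (a : ℕ) (ha : 1 ≤ a) (r : ℝ)
    (hr1 : (p : ℝ) ^ (-(1 : ℝ) / ((p : ℝ) ^ (a - 1) * ((p : ℝ) - 1))) < r) (hr2 : r < 1)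
    (P : K) (hP : ‖P‖ ≤ 1) (hPq : P ^ p ^ a = P)
    (Z : K) (hZ : ‖Z ^ p ^ a‖ ≤ r⁻¹ ^ p ^ a) (hZP : r ^ p ^ a ≤ ‖Z ^ p ^ a - P‖) :
    ‖Z‖ ≤ r⁻¹ ∧ r ≤ ‖Z - P‖ := by
  have hp : p.Prime := Fact.out
  have hp1 : (1 : ℝ) < (p : ℝ) := by exact_mod_cast hp.one_lt
  have hp0 : (0 : ℝ) < (p : ℝ) := by positivity
  set q : ℕ := p ^ a with hq
  have hq0 : q ≠ 0 := pow_ne_zero _ hp.pos.ne'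
  set D : ℝ := (p : ℝ) ^ (a - 1) * ((p : ℝ) - 1) with hDdef
  have hD : (0 : ℝ) < D := by
    have h2 : (0:ℝ) < (p:ℝ) ^ (a-1) := by positivity
    have : (0:ℝ) < (p:ℝ) - 1 := by linarith
    positivity
  have hr0 : (0 : ℝ) < r := lt_trans (Real.rpow_pos_of_pos hp0 _) hr1
  constructor
  · refine le_of_pow_le_pow_left₀ hq0 (by positivity) ?_
    rwa [← norm_pow]
  · by_contra hcon
    push_neg at hcon
    set h : K := Z - P with hh
    have hZ1 : Z = P + h := by rw [hh]; ring
    have key : Z ^ q - P = ∑ k ∈ Finset.range q, P ^ k * h ^ (q - k) * (Nat.choose q k : K) := by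
      conv_lhs => rw [hZ1, add_pow]
      rw [Finset.sum_range_succ, Nat.sub_self, pow_zero, Nat.choose_self, Nat.cast_one,
        mul_one, mul_one, hPq]
      ring
    -- coefficient bound : ‖choose q m‖ ≤ r ^ (q - m) for 1 ≤ m ≤ q
    have coefb : ∀ m : ℕ, 1 ≤ m → m ≤ q → ‖((Nat.choose q m : ℕ) : K)‖ ≤ r ^ (q - m) := by
      intro m hm1 hmq
      rcases eq_or_lt_of_le hmq with hmeq | hmlt
      · subst hmeq
        simp
      · set v : ℕ := multiplicity p m with hv
        have hpv : p ^ v ∣ m := pow_multiplicity_dvd p m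
        have hvm : p ^ v ≤ m := Nat.le_of_dvd (by omega) hpv
        have hva : v < a := by
          have hlt : p ^ v < p ^ a := lt_of_le_of_lt hvm hmlt
          exact (Nat.pow_lt_pow_iff_right hp.one_lt).mp hlt
        have hdvd : p ^ (a - v) ∣ Nat.choose q m := by
          apply pow_dvd_of_le_emultiplicity
          rw [hp.emultiplicity_choose_prime_pow hmq (by omega)]
        obtain ⟨t, ht⟩ := hdvd
        have hnorm : ‖((Nat.choose q m : ℕ) : K)‖ ≤ ((p : ℝ)⁻¹) ^ (a - v) := by
          rw [ht]
          push_cast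
          rw [norm_mul, norm_pow, hpK]
          calc ((p:ℝ)⁻¹) ^ (a-v) * ‖(t : K)‖ ≤ ((p:ℝ)⁻¹) ^ (a-v) * 1 := by
                gcongr
                exact IsUltrametricDist.norm_natCast_le_one K t
            _ = ((p:ℝ)⁻¹) ^ (a-v) := mul_one _
        refine hnorm.trans ?_
        have hnat : (q - m : ℕ) ≤ (a - v) * (p ^ (a - 1) * (p - 1)) := by
          have := aux_pow_sub_le p hp.one_le a v hva
          omega
        have hreal : ((q - m : ℕ) : ℝ) ≤ ((a - v : ℕ) : ℝ) * D := by
          have hc := (Nat.cast_le (α := ℝ)).mpr hnat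
          refine hc.trans_eq ?_
          push_cast [Nat.cast_sub hp.one_le, hDdef]
          ring
        have step1 : ((p : ℝ) ^ (-(1 : ℝ) / D)) ^ (q - m) ≤ r ^ (q - m) :=
          pow_le_pow_left₀ (Real.rpow_nonneg hp0.le _) hr1.le _
        refine le_trans ?_ step1
        rw [← Real.rpow_natCast ((p : ℝ) ^ (-(1 : ℝ) / D)) (q - m), ← Real.rpow_mul hp0.le]
        have hlhs : ((p : ℝ)⁻¹) ^ (a - v) = (p : ℝ) ^ (-(((a - v : ℕ) : ℝ))) := by
          rw [Real.rpow_neg hp0.le, Real.rpow_natCast, inv_pow]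
        rw [hlhs]
        apply Real.rpow_le_rpow_of_exponent_le hp1.le
        have heq : (-(1:ℝ)/D) * ((q - m : ℕ) : ℝ) = -(((q - m : ℕ) : ℝ) / D) := by
          field_simp
        rw [heq, neg_le_neg_iff, div_le_iff₀ hD]
        exact hreal
    -- bound the sum
    have hsum : ‖Z ^ q - P‖ ≤ r ^ (q - 1) * ‖h‖ := by
      rw [key]
      apply IsUltrametricDist.norm_sum_le_of_forall_le_of_nonneg
      · positivity
      · intro k hk
        rw [Finset.mem_range] at hk
        set m : ℕ := q - k with hm
        have hm1 : 1 ≤ m := by omega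
        have hmq : m ≤ q := by omega
        have hck : Nat.choose q k = Nat.choose q m := by
          rw [hm, Nat.choose_symm (by omega)]
        rw [norm_mul, norm_mul, norm_pow, norm_pow, hck]
        have b1 : ‖P‖ ^ k ≤ 1 := pow_le_one₀ (norm_nonneg _) hP
        have b2 : ‖h‖ ^ m ≤ ‖h‖ * r ^ (m - 1) := by
          have : ‖h‖ ^ m = ‖h‖ * ‖h‖ ^ (m - 1) := by
            rw [← pow_succ']
            congr 1
            omega
          rw [this]
          exact mul_le_mul_of_nonneg_left
            (pow_le_pow_left₀ (norm_nonneg _) hcon.le _) (norm_nonneg _)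
        have b3 := coefb m hm1 hmq
        calc ‖P‖ ^ k * ‖h‖ ^ m * ‖((Nat.choose q m : ℕ) : K)‖
            ≤ 1 * (‖h‖ * r ^ (m - 1)) * r ^ (q - m) := by
              gcongr
          _ = r ^ ((q - m) + (m - 1)) * ‖h‖ := by rw [pow_add]; ring
          _ = r ^ (q - 1) * ‖h‖ := by congr 2; omega
    have hlt : r ^ (q - 1) * ‖h‖ < r ^ q := by
      calc r ^ (q - 1) * ‖h‖ < r ^ (q - 1) * r :=
            mul_lt_mul_of_pos_left hcon (pow_pos hr0 _)
        _ = r ^ q := by rw [← pow_succ]; congr 1; omega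
    exact absurd (hZP.trans hsum) (not_le.mpr hlt)
end

section
/- Let m ≥ 1 and n be integers with ⌈m/p⌉ ≤ n ≤ m. Then: (i) C(n,m) is p-integral, and if C(n,m) ≠ 0 then padicValRat p (C(n,m)) ≥ (n·p − m)/(p − 1) − 1 (an inequality of rational numbers) and padicValRat p (C(n,m)) ≥ 0; (ii) C(n,m) is a p-adic unit — that is, C(n,m) ≠ 0 and padicValRat p (C(n,m)) = 0 — if and only if n = ⌈m/p⌉; (iii) if n = ⌈m/p⌉ then, setting ε := m − (n−1)·p (so 1 ≤ ε ≤ p), one has C(n,m) ≡ (−1)^{ε−1} (mod p), i.e. either C(n,m) = (−1)^{ε−1} or padicValRat p (C(n,m) − (−1)^{ε−1}) ≥ 1. -/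
open Finset

/-- The rational numbers `C(n,m) = (m/(np)) ∑ ∏_{k=1}^n (p choose i_k)`, the sum ranging over
all `n`-tuples `(i_1, …, i_n)` with `1 ≤ i_k ≤ p` and `i_1 + ⋯ + i_n = m`. -/
noncomputable def dworkC (p n m : ℕ) : ℚ :=
  (m : ℚ) / ((n : ℚ) * (p : ℚ)) *
    ∑ i ∈ (Fintype.piFinset fun _ : Fin n => Finset.Icc 1 p).filter
        (fun i => ∑ k, i k = m),
      ∏ k, (p.choose (i k) : ℚ)

/-!
Summing `m = i_1 + ⋯ + i_n` over the tuples, symmetry in the coordinates and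
`i (p choose i) = p (p-1 choose i-1)` show that `C(n,m)` is the natural number
`D = ∑ (p-1 choose i_1 - 1) ∏_{k ≥ 2} (p choose i_k)`. A term of `D` in which `s` of the entries
`i_2, …, i_n` differ from `p` is divisible by `p^s`, and `m ≥ 1 + s + (n-1-s) p` forces
`s ≥ (np - m)/(p-1) - 1`. If `n > ⌈m/p⌉` every term has `s ≥ 1`; if `n = ⌈m/p⌉` the only term
with `s = 0` comes from the tuple `(ε, p, …, p)`, and it is `(p-1 choose ε-1) ≡ (-1)^(ε-1)`.
-/

def dworkTuples (p N m : ℕ) : Finset (Fin N → ℕ) :=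
  (Fintype.piFinset fun _ : Fin N => Icc 1 p).filter (fun i => ∑ k, i k = m)

lemma comp_perm_mem_dworkTuples_iff {p N m : ℕ} (σ : Equiv.Perm (Fin N)) (i : Fin N → ℕ) :
    i ∘ σ ∈ dworkTuples p N m ↔ i ∈ dworkTuples p N m := by
  simp only [dworkTuples, mem_filter, Fintype.mem_piFinset, Function.comp_apply,
    Equiv.sum_comp σ i]
  exact and_congr_left' (σ.forall_congr fun {_} => Iff.rfl)

lemma sum_coord_mul_prod_choose_eq (p N m : ℕ) (k l : Fin N) :
    ∑ i ∈ dworkTuples p N m, i k * ∏ j, p.choose (i j) =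
      ∑ i ∈ dworkTuples p N m, i l * ∏ j, p.choose (i j) := by
  let σ := Equiv.swap k l
  refine sum_nbij' (· ∘ σ) (· ∘ σ) (fun i hi => ?_) (fun i hi => ?_) (fun i _ => ?_)
    (fun i _ => ?_) (fun i _ => ?_)
  · exact (comp_perm_mem_dworkTuples_iff σ i).2 hi
  · exact (comp_perm_mem_dworkTuples_iff σ i).2 hi
  all_goals simp [σ, Function.comp_def, Equiv.prod_comp σ (fun j => p.choose (i j))]

def dworkD (p n m : ℕ) : ℕ :=
  ∑ i ∈ dworkTuples p (n + 1) m, (p - 1).choose (i 0 - 1) * ∏ j : Fin n, p.choose (i j.succ)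

lemma mul_choose_eq_mul_choose_sub_one {p k : ℕ} (hp : p ≠ 0) (hk : k ≠ 0) :
    k * p.choose k = p * (p - 1).choose (k - 1) := by
  obtain ⟨p, rfl⟩ : ∃ q, p = q + 1 := ⟨p - 1, by omega⟩
  obtain ⟨k, rfl⟩ : ∃ l, k = l + 1 := ⟨k - 1, by omega⟩
  rw [Nat.add_sub_cancel, Nat.add_sub_cancel, Nat.add_one_mul_choose_eq, mul_comm]

lemma mul_sum_prod_choose_eq {p : ℕ} (hp : p ≠ 0) (n m : ℕ) :
    m * ∑ i ∈ dworkTuples p (n + 1) m, ∏ j, p.choose (i j) = (n + 1) * (p * dworkD p n m) := by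
  have hm : ∀ i ∈ dworkTuples p (n + 1) m,
      m * ∏ j, p.choose (i j) = ∑ k, i k * ∏ j, p.choose (i j) := fun i hi => by
    rw [← sum_mul, (mem_filter.1 hi).2]
  have hk : ∀ i ∈ dworkTuples p (n + 1) m, i 0 * ∏ j, p.choose (i j) =
      p * ((p - 1).choose (i 0 - 1) * ∏ j : Fin n, p.choose (i j.succ)) := fun i hi => by
    have hi0 := (mem_Icc.1 (Fintype.mem_piFinset.1 (mem_filter.1 hi).1 0)).1
    rw [Fin.prod_univ_succ, ← mul_assoc, mul_choose_eq_mul_choose_sub_one hp (by omega),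
      mul_assoc]
  rw [mul_sum, sum_congr rfl hm, sum_comm,
    sum_congr rfl fun k _ => sum_coord_mul_prod_choose_eq p (n + 1) m k 0, sum_const, card_univ,
    Fintype.card_fin, smul_eq_mul, sum_congr rfl hk, ← mul_sum, dworkD]

lemma dworkC_succ_eq_dworkD {p : ℕ} (hp : p ≠ 0) (n m : ℕ) :
    dworkC p (n + 1) m = dworkD p n m := by
  have key : (m : ℚ) * ∑ i ∈ dworkTuples p (n + 1) m, ∏ j, (p.choose (i j) : ℚ) =
      (n + 1) * (p * dworkD p n m) := by
    exact_mod_cast mul_sum_prod_choose_eq hp n m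
  have hp' : (p : ℚ) ≠ 0 := Nat.cast_ne_zero.2 hp
  rw [dworkC, ← dworkTuples, div_mul_eq_mul_div, key]
  push_cast
  field_simp

lemma card_mul_le_sum_add_card_mul {ι : Type*} [Fintype ι] {p : ℕ} (f : ι → ℕ)
    (hf : ∀ j, f j ∈ Icc 1 p) :
    Fintype.card ι * p ≤ ∑ j, f j + #{j | f j ≠ p} * (p - 1) := by
  calc Fintype.card ι * p = ∑ _j, p := by simp
    _ ≤ ∑ j, (f j + if f j ≠ p then p - 1 else 0) := sum_le_sum fun j _ => by
        have := mem_Icc.1 (hf j)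
        split_ifs <;> omega
    _ = ∑ j, f j + #{j | f j ≠ p} * (p - 1) := by
        rw [sum_add_distrib, sum_ite, sum_const_zero, add_zero, sum_const, smul_eq_mul]

lemma pow_card_dvd_prod_choose {ι : Type*} [Fintype ι] {p : ℕ} (hp : p.Prime) (f : ι → ℕ)
    (hf : ∀ j, f j ∈ Icc 1 p) :
    p ^ #{j | f j ≠ p} ∣ ∏ j, p.choose (f j) := by
  rw [← prod_filter_mul_prod_filter_not univ (fun j => f j ≠ p), ← prod_const]
  refine Dvd.dvd.mul_right (prod_dvd_prod_of_dvd _ _ fun j hj => ?_) _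
  have := mem_Icc.1 (hf j)
  exact hp.dvd_choose_self (by omega) (lt_of_le_of_ne this.2 (mem_filter.1 hj).2)

lemma pow_dvd_dworkD {p : ℕ} (hp : p.Prime) {n m c : ℕ} (hc : m + c * (p - 1) < (n + 1) * p) :
    p ^ c ∣ dworkD p n m := by
  refine dvd_sum fun i hi => ?_
  have hI : ∀ k, i k ∈ Icc 1 p := Fintype.mem_piFinset.1 (mem_filter.1 hi).1
  have hsum : i 0 + ∑ j : Fin n, i j.succ = m := by
    rw [← Fin.sum_univ_succ]; exact (mem_filter.1 hi).2
  have hcount := card_mul_le_sum_add_card_mul (fun j : Fin n => i j.succ) fun j => hI j.succ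
  rw [Fintype.card_fin] at hcount
  have hi0 := (mem_Icc.1 (hI 0)).1
  have hcs : c ≤ #{j | i (Fin.succ j) ≠ p} := by
    by_contra! h
    have := Nat.mul_le_mul_right (p - 1) (Nat.succ_le_of_lt h)
    rw [Nat.succ_mul] at this
    rw [add_mul, one_mul] at hc
    have := hp.one_le
    omega
  exact (pow_dvd_pow p hcs).trans
    ((pow_card_dvd_prod_choose hp (fun j : Fin n => i j.succ) fun j => hI j.succ).mul_left _)

lemma choose_sub_one_cast_zmod {p : ℕ} (hp : p.Prime) {k : ℕ} (hk : k ≤ p - 1) :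
    ((p - 1).choose k : ZMod p) = (-1) ^ k := by
  induction k with
  | zero => simp
  | succ k ih =>
    have hpascal : (p - 1).choose k + (p - 1).choose (k + 1) = p.choose (k + 1) := by
      rw [← Nat.choose_succ_succ', Nat.sub_add_cancel hp.one_le]
    have hdvd : p ∣ p.choose (k + 1) := hp.dvd_choose_self k.succ_ne_zero (by omega)
    have hz := congrArg (Nat.cast : ℕ → ZMod p) hpascal
    rw [(ZMod.natCast_eq_zero_iff _ _).2 hdvd, Nat.cast_add, ih (by omega)] at hz
    linear_combination hz

lemma dworkD_cast_zmod {p : ℕ} (hp : p.Prime) {n m : ℕ} (hlo : n * p < m)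
    (hhi : m ≤ (n + 1) * p) :
    (dworkD p n m : ZMod p) = (-1) ^ (m - n * p - 1) := by
  set i₀ : Fin (n + 1) → ℕ := Fin.cons (m - n * p) fun _ => p
  have hhi' : m ≤ n * p + p := by rwa [add_one_mul] at hhi
  have hmem : i₀ ∈ dworkTuples p (n + 1) m := by
    simp only [dworkTuples, mem_filter, Fintype.mem_piFinset, Fin.forall_fin_succ,
      Fin.sum_univ_succ, i₀, Fin.cons_zero, Fin.cons_succ, mem_Icc, sum_const, card_univ,
      Fintype.card_fin, smul_eq_mul]
    refine ⟨⟨⟨by omega, by omega⟩, fun _ => ⟨hp.one_le, le_rfl⟩⟩, ?_⟩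
    omega
  rw [dworkD, Nat.cast_sum, sum_eq_single_of_mem i₀ hmem]
  · simpa [i₀] using choose_sub_one_cast_zmod hp (by omega : m - n * p - 1 ≤ p - 1)
  · intro i hi hne
    have hI : ∀ k, i k ∈ Icc 1 p := Fintype.mem_piFinset.1 (mem_filter.1 hi).1
    obtain ⟨j, hj⟩ : ∃ j : Fin n, i j.succ ≠ p := by
      by_contra! hall
      have hsum : i 0 + n * p = m := by
        simpa [Fin.sum_univ_succ, hall] using (mem_filter.1 hi).2
      exact hne (funext (Fin.cases (by simp [i₀]; omega) (by simp [i₀, hall])))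
    have hij := mem_Icc.1 (hI j.succ)
    rw [ZMod.natCast_eq_zero_iff]
    exact dvd_mul_of_dvd_right ((hp.dvd_choose_self (by omega) (lt_of_le_of_ne hij.2 hj)).trans
      (dvd_prod_of_mem (fun j : Fin n => p.choose (i j.succ)) (mem_univ j))) _

lemma padicValNat_dworkD_ge {p : ℕ} [Fact p.Prime] {n m : ℕ} (hD : dworkD p n m ≠ 0) :
    (((n : ℚ) + 1) * p - m) / (p - 1) - 1 ≤ padicValNat p (dworkD p n m) := by
  have hp : p.Prime := Fact.out
  have hp1 : (0 : ℚ) < p - 1 := by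
    have : (2 : ℚ) ≤ p := by exact_mod_cast hp.two_le
    linarith
  by_contra! h
  rw [lt_sub_iff_add_lt, lt_div_iff₀ hp1] at h
  have hc : m + (padicValNat p (dworkD p n m) + 1) * (p - 1) < (n + 1) * p := by
    rw [← Nat.cast_lt (α := ℚ)]
    push_cast [Nat.cast_sub hp.one_le]
    linarith
  exact pow_succ_padicValNat_not_dvd hD (pow_dvd_dworkD hp hc)

lemma not_dvd_dworkD_iff {p : ℕ} (hp : p.Prime) {n m : ℕ} (hhi : m ≤ (n + 1) * p) :
    ¬ p ∣ dworkD p n m ↔ n * p < m := by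
  refine ⟨fun hD => ?_, fun hlo hD => ?_⟩
  · by_contra! hle
    have hc : m + 1 * (p - 1) < (n + 1) * p := by
      rw [add_one_mul]
      have := hp.one_le
      omega
    exact hD (by simpa using pow_dvd_dworkD hp hc)
  · have h := dworkD_cast_zmod hp hlo hhi
    rw [(ZMod.natCast_eq_zero_iff _ _).2 hD] at h
    have : Fact (1 < p) := ⟨hp.one_lt⟩
    exact (isUnit_neg_one.pow _).ne_zero h.symm

lemma eq_or_one_le_padicValRat_sub {p : ℕ} [Fact p.Prime] {a b : ℤ}
    (h : (a : ZMod p) = b) : (a : ℚ) = b ∨ 1 ≤ padicValRat p (a - b) := by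
  have hdvd : (p : ℤ) ^ 1 ∣ a - b := by
    rw [pow_one, ← ZMod.intCast_zmod_eq_zero_iff_dvd, Int.cast_sub, h, sub_self]
  rcases (padicValInt_dvd_iff 1 (a - b)).1 hdvd with h0 | h1
  · exact Or.inl (by exact_mod_cast sub_eq_zero.1 h0)
  · exact Or.inr (by rw [← Int.cast_sub, padicValRat.of_int]; exact_mod_cast h1)

theorem dworkC_padic_estimates_general
    (p : ℕ) [Fact p.Prime] (m n : ℕ) (hm : 1 ≤ m)
    (h1 : m ⌈/⌉ p ≤ n) :
    (dworkC p n m ≠ 0 →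
      ((n : ℚ) * (p : ℚ) - (m : ℚ)) / ((p : ℚ) - 1) - 1 ≤
          (padicValRat p (dworkC p n m) : ℚ) ∧
        0 ≤ padicValRat p (dworkC p n m)) ∧
    ((dworkC p n m ≠ 0 ∧ padicValRat p (dworkC p n m) = 0) ↔ n = m ⌈/⌉ p) ∧
    (n = m ⌈/⌉ p →
      dworkC p n m = (-1 : ℚ) ^ (m - (n - 1) * p - 1) ∨
        1 ≤ padicValRat p (dworkC p n m - (-1 : ℚ) ^ (m - (n - 1) * p - 1))) := by
  have hp : p.Prime := Fact.out
  have hceil : ∀ k, m ⌈/⌉ p ≤ k ↔ m ≤ p * k := fun k => ceilDiv_le_iff_le_mul hp.pos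
  obtain ⟨n, rfl⟩ : ∃ k, n = k + 1 := Nat.exists_eq_add_one.2 <| Nat.pos_of_ne_zero fun h0 => by
    have := (hceil 0).1 (h0 ▸ h1)
    omega
  have hhi : m ≤ (n + 1) * p := by rw [mul_comm]; exact (hceil _).1 h1
  have hunit : n + 1 = m ⌈/⌉ p ↔ n * p < m := by
    rw [mul_comm, ← not_le, ← hceil]
    omega
  simp only [dworkC_succ_eq_dworkD hp.ne_zero, padicValRat.of_nat, Nat.add_sub_cancel]
  refine ⟨fun hD => ⟨?_, by positivity⟩, ?_, fun hn => ?_⟩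
  · rw [Int.cast_natCast, Nat.cast_succ]
    exact padicValNat_dworkD_ge (Nat.cast_ne_zero.1 hD)
  · rw [hunit, ← not_dvd_dworkD_iff hp hhi, Nat.cast_ne_zero, Nat.cast_eq_zero,
      padicValNat.eq_zero_iff]
    have := hp.ne_one
    tauto
  · have hz := dworkD_cast_zmod hp (hunit.1 hn) hhi
    simpa using eq_or_one_le_padicValRat_sub (p := p) (a := dworkD p n m)
      (b := (-1) ^ (m - n * p - 1)) (by push_cast; exact hz)

/-- `p`-adic estimates for the coefficients `C(n,m)` (for `⌈m/p⌉ ≤ n ≤ m`, `m ≥ 1`):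
(i) `C(n,m)` is `p`-integral and, when nonzero, `ord_p C(n,m) ≥ (np-m)/(p-1) - 1`;
(ii) `C(n,m)` is a `p`-adic unit iff `n = ⌈m/p⌉`;
(iii) if `n = ⌈m/p⌉` then `C(n,m) ≡ (-1)^{ε-1} mod p` where `ε = m - (n-1)p`. -/
theorem dworkC_padic_estimates
    (p : ℕ) [Fact p.Prime] (m n : ℕ) (hm : 1 ≤ m)
    (h1 : m ⌈/⌉ p ≤ n) (h2 : n ≤ m) :
    (dworkC p n m ≠ 0 →
      ((n : ℚ) * (p : ℚ) - (m : ℚ)) / ((p : ℚ) - 1) - 1 ≤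
          (padicValRat p (dworkC p n m) : ℚ) ∧
        0 ≤ padicValRat p (dworkC p n m)) ∧
    ((dworkC p n m ≠ 0 ∧ padicValRat p (dworkC p n m) = 0) ↔ n = m ⌈/⌉ p) ∧
    (n = m ⌈/⌉ p →
      dworkC p n m = (-1 : ℚ) ^ (m - (n - 1) * p - 1) ∨
        1 ≤ padicValRat p (dworkC p n m - (-1 : ℚ) ^ (m - (n - 1) * p - 1))) :=
  dworkC_padic_estimates_general p m n hm h1
end

section
/- Let R be a commutative integral domain, let a ≥ 1 be an integer, and let ζ ∈ R be a primitive a-th root of unity (IsPrimitiveRoot ζ a). Let ι be a finite type and M : Matrix ι ι R a square matrix. Then in the polynomial ring R[X]: det(1 − X^a • (M^a).map C) = ∏_{k=0}^{a−1} det(1 − (ζ^k • X) • M.map C), where 1 denotes the identity matrix over R[X], C : R → R[X] is the constant-polynomial ring homomorphism, and • denotes scalar multiplication of a matrix by a polynomial. (Equivalently, det(1 − T^a·φ^a) = ∏_{k=0}^{a−1} det(1 − ζ^k·T·φ) for an endomorphism φ of a finite free R-module.) -/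
/-!
Over a domain containing a primitive `a`-th root of unity `ζ`, one has
`1 - T ^ a = ∏ k < a, (1 - ζ ^ k T)` in `R[T]`. Substituting `T ↦ X • M` and taking
determinants, which are multiplicative, gives the identity.
-/

open Polynomial Finset

theorem IsPrimitiveRoot.pow_sub_pow_eq_prod_range_sub_mul {R : Type*} [CommRing R] [IsDomain R]
    {ζ : R} {n : ℕ} (hpos : 0 < n) (h : IsPrimitiveRoot ζ n) (x y : R) :
    x ^ n - y ^ n = ∏ k ∈ range n, (x - ζ ^ k * y) := by
  classical
  rw [h.pow_sub_pow_eq_prod_sub_mul x y hpos, Finset.prod_eq_multiset_prod, nthRootsFinset,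
    Multiset.toFinset_val, h.nthRoots_one_nodup.dedup, h.nthRoots_eq (one_pow n)]
  simp only [Finset.prod_eq_multiset_prod, Multiset.map_map, Function.comp_def, mul_one,
    Finset.range_val]

theorem IsPrimitiveRoot.prod_range_one_sub_C_mul_X {R : Type*} [CommRing R] [IsDomain R]
    {ζ : R} {n : ℕ} (hpos : 0 < n) (h : IsPrimitiveRoot ζ n) :
    ∏ k ∈ range n, (1 - C (ζ ^ k) * X : R[X]) = 1 - X ^ n := by
  simpa [map_pow] using
    ((h.map_of_injective C_injective).pow_sub_pow_eq_prod_range_sub_mul hpos 1 X).symm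

theorem IsPrimitiveRoot.det_one_sub_pow_smul_eq_prod {R A ι : Type*} [CommRing R] [IsDomain R]
    [CommRing A] [Algebra R A] [Fintype ι] [DecidableEq ι] {ζ : R} {n : ℕ} (hpos : 0 < n)
    (h : IsPrimitiveRoot ζ n) (t : A) (N : Matrix ι ι A) :
    (1 - t ^ n • N ^ n).det = ∏ k ∈ range n, (1 - (ζ ^ k • t) • N).det := by
  -- The matrix factors need not commute, so the product is formed in `R[X]` and pushed
  -- through the multiplicative map `det ∘ aeval (t • N)`.
  let f : R[X] →* A :=
    Matrix.detMonoidHom.comp (MonoidHomClass.toMonoidHom (aeval (R := R) (t • N)))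
  have hf := congrArg f (h.prod_range_one_sub_C_mul_X hpos)
  rw [map_prod] at hf
  simpa only [f, MonoidHom.comp_apply, Matrix.coe_detMonoidHom, MonoidHom.coe_coe, map_sub,
    map_one, map_mul, aeval_X_pow, aeval_C, aeval_X, ← Algebra.smul_def, ← smul_assoc,
    _root_.smul_pow] using hf.symm

/-- For an endomorphism (given by a square matrix `M`) of a finite free module over an
integral domain `R` containing a primitive `a`-th root of unity `ζ`, one has
`det(1 - T^a • M^a) = ∏_{k=0}^{a-1} det(1 - ζ^k T • M)` in `R[X]`. -/
theorem det_one_sub_pow_smul_eq_prod_primitiveRoot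
    (R : Type*) [CommRing R] [IsDomain R]
    (a : ℕ) (ha : 1 ≤ a) (ζ : R) (hζ : IsPrimitiveRoot ζ a)
    (ι : Type*) [Fintype ι] [DecidableEq ι] (M : Matrix ι ι R) :
    Matrix.det (1 - (Polynomial.X ^ a : Polynomial R) • (M ^ a).map Polynomial.C) =
      ∏ k ∈ Finset.range a,
        Matrix.det (1 - (ζ ^ k • (Polynomial.X : Polynomial R)) • M.map Polynomial.C) := by
  rw [Matrix.map_pow]
  exact hζ.det_one_sub_pow_smul_eq_prod ha X (M.map C)
end
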